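/- Let λ ∈ ℝ, set μ_j := −j⁴π⁴ + λ j²π², and let a ∈ ℝ with a ∉ 𝒩₁. Suppose (c_j)_{j≥1} is a bounded sequence of complex numbers such that, for every positive integer j, the series ∑_{k≥1, k≠j} c_k / (a + μ_k − μ_j) converges absolutely and c_j + a · ∑_{k≥1, k≠j} c_k / (a + μ_k − μ_j) = 1. Then there exists a constant C > 0 such that |c_j − 1| ≤ C (1 + log j) / j³ for every positive integer j. -/

import Mathlib

/-!
From the equation, `c j - 1 = -a * ∑_{k ≠ j} c k / (a + μ k - μ j)`. Since
`μ k - μ j = -π² (k² - j²) (π² (k² + j²) - λ)`, once `j ≥ |a| + |λ| + 1` every denominator has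
modulus at least `|k - j| (k + j)³`, and `∑_{k ≠ j} 1 / (|k - j| (k + j)³) ≤ 3 (1 + log j) / j³`:
the terms with `k ≤ 2j` contribute at most `2 H_j / j³`, those with `k > 2j` at most
`∑_{k > j} 1 / (j² k²) ≤ 1 / j³`. The finitely many remaining `j` are absorbed into the constant
because `c` is bounded.
-/

open Real Finset

noncomputable def mu (lam x : ℝ) : ℝ := -x ^ 4 * π ^ 4 + lam * x ^ 2 * π ^ 2

theorem abs_sub_mul_add_pow_three_le_abs_add_mu_sub_mu {lam a x y : ℝ} (hx : 0 ≤ x)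
    (hxy : 1 ≤ |x - y|) (hy : |a| + |lam| + 1 ≤ y) :
    |x - y| * (x + y) ^ 3 ≤ |a + mu lam x - mu lam y| := by
  have hsum : 1 ≤ x + y := by linarith [abs_nonneg a, abs_nonneg lam]
  have hπ : 9 ≤ π ^ 2 := by nlinarith [pi_gt_three]
  set D := π ^ 2 * (x ^ 2 + y ^ 2) - lam
  have hD : π ^ 2 * (x + y) ^ 2 / 4 ≤ D := by
    nlinarith [le_abs_self lam, abs_nonneg a, mul_nonneg (sq_nonneg π) (sq_nonneg (x - y)),
      mul_nonneg (sq_nonneg π) (sq_nonneg x)]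
  have hΔ : |mu lam x - mu lam y| = π ^ 2 * |x - y| * ((x + y) * D) := by
    rw [show mu lam x - mu lam y = -(π ^ 2 * (x - y) * ((x + y) * D)) by unfold mu D; ring,
      abs_neg, abs_mul, abs_mul, abs_of_nonneg (sq_nonneg π),
      abs_of_nonneg (mul_nonneg (by linarith) ((by positivity : (0:ℝ) ≤ _).trans hD))]
  set R := |x - y| * (x + y) ^ 3
  have h2R : 2 * R ≤ |mu lam x - mu lam y| := by
    rw [hΔ]
    calc 2 * R ≤ π ^ 2 / 4 * π ^ 2 * R := by gcongr; nlinarith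
      _ = π ^ 2 * |x - y| * ((x + y) * (π ^ 2 * (x + y) ^ 2 / 4)) := by ring
      _ ≤ _ := by gcongr
  have haR : |a| ≤ R :=
    calc |a| ≤ x + y := by linarith [abs_nonneg lam]
      _ ≤ (x + y) ^ 3 := le_self_pow₀ hsum (by norm_num)
      _ ≤ R := le_mul_of_one_le_left (by positivity) hxy
  have := abs_sub (a + mu lam x - mu lam y) a
  rw [show a + mu lam x - mu lam y - a = mu lam x - mu lam y by ring] at this
  linarith

theorem sum_inv_le_harmonic_of_injOn {j : ℕ} {t : Finset ℕ} {g : ℕ → ℕ} (hg : Set.InjOn g t)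
    (ht : ∀ k ∈ t, g k ∈ Icc 1 j) : ∑ k ∈ t, ((g k : ℝ))⁻¹ ≤ harmonic j := by
  rw [← sum_image (f := fun i : ℕ => ((i : ℝ))⁻¹) hg, harmonic_eq_sum_Icc]
  push_cast
  exact sum_le_sum_of_subset_of_nonneg (fun i hi => by
    obtain ⟨k, hk, rfl⟩ := mem_image.mp hi; exact ht k hk) fun _ _ _ => by positivity

theorem sum_inv_abs_sub_le_two_mul_harmonic {j : ℕ} {s : Finset ℕ}
    (hs : ∀ k ∈ s, k ≠ j ∧ k ≤ 2 * j) :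
    ∑ k ∈ s, |(k : ℝ) - j|⁻¹ ≤ 2 * harmonic j := by
  rw [← sum_filter_add_sum_filter_not s (· < j), two_mul]
  gcongr
  · rw [sum_congr rfl fun k hk => by
      rw [abs_sub_comm, ← Nat.cast_sub (mem_filter.mp hk).2.le, Nat.abs_cast]]
    refine sum_inv_le_harmonic_of_injOn (g := fun k => j - k) (fun k hk l hl h => ?_) fun k hk => ?_
    · simp only [coe_filter, Set.mem_ofPred_eq] at hk hl h; omega
    · simp only [mem_filter, mem_Icc] at hk ⊢; omega
  · rw [sum_congr rfl fun k hk => by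
      rw [← Nat.cast_sub (not_lt.mp (mem_filter.mp hk).2), Nat.abs_cast]]
    refine sum_inv_le_harmonic_of_injOn (g := fun k => k - j) (fun k hk l hl h => ?_) fun k hk => ?_
    · simp only [coe_filter, Set.mem_ofPred_eq] at hk hl h; omega
    · have := hs k (mem_filter.mp hk).1
      simp only [mem_filter, mem_Icc] at hk ⊢; omega

theorem sum_inv_sq_le_inv_of_lt {n : ℕ} (hn : n ≠ 0) {t : Finset ℕ} (ht : ∀ k ∈ t, n < k) :
    ∑ k ∈ t, ((k : ℝ) ^ 2)⁻¹ ≤ (n : ℝ)⁻¹ := by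
  set N := max n (t.sup id)
  calc ∑ k ∈ t, ((k : ℝ) ^ 2)⁻¹ ≤ ∑ k ∈ Ioc n N, ((k : ℝ) ^ 2)⁻¹ :=
        sum_le_sum_of_subset_of_nonneg (fun k hk => mem_Ioc.mpr ⟨ht k hk,
          (le_sup (f := id) hk).trans (le_max_right _ _)⟩) fun _ _ _ => by positivity
    _ ≤ (n : ℝ)⁻¹ - (N : ℝ)⁻¹ := sum_Ioc_inv_sq_le_sub hn (le_max_left _ _)
    _ ≤ (n : ℝ)⁻¹ := sub_le_self _ (by positivity)

theorem sum_inv_abs_sub_mul_add_pow_three_le {j : ℕ} (hj : 1 ≤ j) {s : Finset ℕ} (hs : j ∉ s) :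
    ∑ k ∈ s, (|(k : ℝ) - j| * ((k : ℝ) + j) ^ 3)⁻¹ ≤ 3 * (1 + log j) / (j : ℝ) ^ 3 := by
  have hj0 : (0 : ℝ) < j := by exact_mod_cast hj
  have hlog : 0 ≤ log j := log_nonneg (by exact_mod_cast hj)
  rw [← sum_filter_add_sum_filter_not s (· ≤ 2 * j)]
  have hnear : ∑ k ∈ s with k ≤ 2 * j, (|(k : ℝ) - j| * ((k : ℝ) + j) ^ 3)⁻¹
      ≤ ((j : ℝ) ^ 3)⁻¹ * (2 * (1 + log j)) := by
    calc _ ≤ ∑ k ∈ s with k ≤ 2 * j, ((j : ℝ) ^ 3)⁻¹ * |(k : ℝ) - j|⁻¹ := by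
          refine sum_le_sum fun k hk => ?_
          have hkj : k ≠ j := fun h => hs (h ▸ (mem_filter.mp hk).1)
          have : (0 : ℝ) < |(k : ℝ) - j| := abs_pos.mpr (sub_ne_zero.mpr (by exact_mod_cast hkj))
          rw [mul_inv, mul_comm]
          gcongr
          linarith [(Nat.cast_nonneg k : (0 : ℝ) ≤ k)]
      _ ≤ ((j : ℝ) ^ 3)⁻¹ * (2 * (1 + log j)) := by
          rw [← mul_sum]
          gcongr
          refine (sum_inv_abs_sub_le_two_mul_harmonic fun k hk => ?_).trans ?_
          · exact ⟨fun h => hs (h ▸ (mem_filter.mp hk).1), (mem_filter.mp hk).2⟩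
          · linarith [harmonic_le_one_add_log j]
  have hfar : ∑ k ∈ s with ¬k ≤ 2 * j, (|(k : ℝ) - j| * ((k : ℝ) + j) ^ 3)⁻¹
      ≤ ((j : ℝ) ^ 3)⁻¹ * (1 + log j) := by
    calc _ ≤ ∑ k ∈ s with ¬k ≤ 2 * j, ((j : ℝ) ^ 2)⁻¹ * ((k : ℝ) ^ 2)⁻¹ := by
          refine sum_le_sum fun k hk => ?_
          have hk : 2 * (j : ℝ) < k := by exact_mod_cast not_le.mp (mem_filter.mp hk).2
          rw [← mul_inv, abs_of_pos (by linarith)]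
          refine inv_anti₀ (by have : (0 : ℝ) < k := by linarith
                               positivity) ?_
          calc (j : ℝ) ^ 2 * (k : ℝ) ^ 2 = (j : ℝ) * (j * k ^ 2) := by ring
            _ ≤ ((k : ℝ) - j) * ((k + j) * (k + j) ^ 2) := by gcongr <;> linarith
            _ = ((k : ℝ) - j) * ((k : ℝ) + j) ^ 3 := by ring
      _ = ((j : ℝ) ^ 2)⁻¹ * ∑ k ∈ s with ¬k ≤ 2 * j, ((k : ℝ) ^ 2)⁻¹ := by rw [mul_sum]
      _ ≤ ((j : ℝ) ^ 2)⁻¹ * (j : ℝ)⁻¹ := by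
          gcongr
          exact sum_inv_sq_le_inv_of_lt (by omega) fun k hk => by
            have := (mem_filter.mp hk).2; omega
      _ ≤ ((j : ℝ) ^ 3)⁻¹ * (1 + log j) := by
          rw [← mul_inv, ← pow_succ]
          exact le_mul_of_one_le_right (by positivity) (by linarith)
  calc _ ≤ ((j : ℝ) ^ 3)⁻¹ * (2 * (1 + log j)) + ((j : ℝ) ^ 3)⁻¹ * (1 + log j) :=
        add_le_add hnear hfar
    _ = 3 * (1 + log j) / (j : ℝ) ^ 3 := by ring

theorem one_le_abs_natCast_sub {k j : ℕ} (h : k ≠ j) : (1 : ℝ) ≤ |(k : ℝ) - j| := by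
  have := Int.one_le_abs (sub_ne_zero.mpr (Int.natCast_inj.not.mpr h))
  exact_mod_cast this

theorem tsum_norm_div_le {j : ℕ+} {c : ℕ+ → ℂ} {d : ℕ+ → ℝ} {M : ℝ} (hM : ∀ k, ‖c k‖ ≤ M)
    (hd : ∀ k ≠ j, |(k : ℝ) - j| * ((k : ℝ) + j) ^ 3 ≤ |d k|)
    (hs : Summable fun k : {k : ℕ+ // k ≠ j} => ‖c k / (d k : ℂ)‖) :
    ∑' k : {k : ℕ+ // k ≠ j}, ‖c k / (d k : ℂ)‖ ≤ M * (3 * (1 + log j) / (j : ℝ) ^ 3) := by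
  have hM0 : 0 ≤ M := (norm_nonneg _).trans (hM j)
  refine hs.tsum_le_of_sum_le fun t => ?_
  calc ∑ k ∈ t, ‖c k / (d k : ℂ)‖
      ≤ ∑ k ∈ t, M * (|((k : ℕ+) : ℝ) - j| * (((k : ℕ+) : ℝ) + j) ^ 3)⁻¹ := by
        refine sum_le_sum fun k _ => ?_
        have hkj : ((k : ℕ+) : ℕ) ≠ j := PNat.coe_injective.ne k.2
        have := one_le_abs_natCast_sub hkj
        rw [norm_div, Complex.norm_real, norm_eq_abs, div_eq_mul_inv]
        exact mul_le_mul (hM k) (inv_anti₀ (by positivity) (hd k k.2)) (by positivity) hM0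
    _ = M * ∑ n ∈ t.image (fun k : {k : ℕ+ // k ≠ j} => ((k : ℕ+) : ℕ)),
          (|(n : ℝ) - j| * ((n : ℝ) + j) ^ 3)⁻¹ := by
        rw [sum_image fun k _ l _ h => Subtype.ext (PNat.coe_injective h), mul_sum]
    _ ≤ M * (3 * (1 + log j) / (j : ℝ) ^ 3) := by
        gcongr
        refine sum_inv_abs_sub_mul_add_pow_three_le j.pos fun hj => ?_
        obtain ⟨k, _, hk⟩ := mem_image.mp hj
        exact k.2 (PNat.coe_injective hk)

theorem stmt13_general (lam a : ℝ)
    (c : ℕ+ → ℂ) (M : ℝ) (hM : ∀ j : ℕ+, ‖c j‖ ≤ M)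
    (hsum : ∀ j : ℕ+, Summable (fun k : {k : ℕ+ // k ≠ j} =>
      ‖c k / ((a + (-((k : ℕ+) : ℝ) ^ 4 * π ^ 4 + lam * ((k : ℕ+) : ℝ) ^ 2 * π ^ 2)
        - (-(j : ℝ) ^ 4 * π ^ 4 + lam * (j : ℝ) ^ 2 * π ^ 2) : ℝ) : ℂ)‖))
    (heq : ∀ j : ℕ+, c j + (a : ℂ) *
      (∑' k : {k : ℕ+ // k ≠ j},
        c k / ((a + (-((k : ℕ+) : ℝ) ^ 4 * π ^ 4 + lam * ((k : ℕ+) : ℝ) ^ 2 * π ^ 2)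
          - (-(j : ℝ) ^ 4 * π ^ 4 + lam * (j : ℝ) ^ 2 * π ^ 2) : ℝ) : ℂ)) = 1) :
    ∃ C > (0 : ℝ), ∀ j : ℕ+,
      ‖c j - 1‖ ≤ C * (1 + Real.log (j : ℝ)) / (j : ℝ) ^ 3 := by
  have hM0 : 0 ≤ M := (norm_nonneg _).trans (hM 1)
  set B := |a| + |lam| + 1
  have hB : 1 ≤ B := by linarith [abs_nonneg a, abs_nonneg lam]
  refine ⟨(M + 1) * (B ^ 3 + 3 * |a|), by positivity, fun j => ?_⟩
  have hj : (1 : ℝ) ≤ j := by exact_mod_cast j.pos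
  have hlog : 1 ≤ 1 + log j := by linarith [log_nonneg hj]
  rw [mul_div_assoc]
  rcases le_or_gt B j with hjB | hjB
  · have hT := (norm_tsum_le_tsum_norm (hsum j)).trans (tsum_norm_div_le (d := fun k =>
      a + mu lam k - mu lam j) hM (fun k hk => abs_sub_mul_add_pow_three_le_abs_add_mu_sub_mu
        (Nat.cast_nonneg _) (one_le_abs_natCast_sub (PNat.coe_injective.ne hk)) hjB) (hsum j))
    rw [← heq j, sub_add_cancel_left, norm_neg, norm_mul, Complex.norm_real, norm_eq_abs]
    calc _ ≤ |a| * (M * (3 * (1 + log j) / (j : ℝ) ^ 3)) := by gcongr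
      _ = 3 * |a| * M * ((1 + log j) / (j : ℝ) ^ 3) := by ring
      _ ≤ _ := by
          have : 1 ≤ B ^ 3 := one_le_pow₀ hB
          refine mul_le_mul_of_nonneg_right ?_ (by positivity)
          nlinarith [abs_nonneg a]
  · calc ‖c j - 1‖ ≤ M + 1 := (norm_sub_le _ _).trans (by rw [norm_one]; linarith [hM j])
      _ = (M + 1) * (j : ℝ) ^ 3 / (j : ℝ) ^ 3 := by field_simp
      _ ≤ (M + 1) * (B ^ 3 + 3 * |a|) * (1 + log j) / (j : ℝ) ^ 3 := by
          refine div_le_div_of_nonneg_right ?_ (by positivity)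
          calc (M + 1) * (j : ℝ) ^ 3 ≤ (M + 1) * (B ^ 3 + 3 * |a|) := by
                gcongr; linarith [abs_nonneg a, pow_le_pow_left₀ (by linarith) hjB.le 3]
            _ ≤ _ := le_mul_of_one_le_right (by positivity) hlog
      _ = _ := by ring

/-- With μ_j := −j⁴π⁴ + λj²π² and a ∉ 𝒩₁, if (c_j) is a bounded sequence of complex
numbers satisfying c_j + a·∑_{k≠j} c_k/(a + μ_k − μ_j) = 1 (with the series converging
absolutely) for every j, then |c_j − 1| ≤ C(1 + log j)/j³ for some C > 0. -/
theorem stmt13 (lam a : ℝ)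
    (ha : a ∉ {x : ℝ | ∃ j k : ℕ+,
      x = (-(k : ℝ) ^ 4 * π ^ 4 + lam * (k : ℝ) ^ 2 * π ^ 2)
        - (-(j : ℝ) ^ 4 * π ^ 4 + lam * (j : ℝ) ^ 2 * π ^ 2)})
    (c : ℕ+ → ℂ) (M : ℝ) (hM : ∀ j : ℕ+, ‖c j‖ ≤ M)
    (hsum : ∀ j : ℕ+, Summable (fun k : {k : ℕ+ // k ≠ j} =>
      ‖c k / ((a + (-((k : ℕ+) : ℝ) ^ 4 * π ^ 4 + lam * ((k : ℕ+) : ℝ) ^ 2 * π ^ 2)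
        - (-(j : ℝ) ^ 4 * π ^ 4 + lam * (j : ℝ) ^ 2 * π ^ 2) : ℝ) : ℂ)‖))
    (heq : ∀ j : ℕ+, c j + (a : ℂ) *
      (∑' k : {k : ℕ+ // k ≠ j},
        c k / ((a + (-((k : ℕ+) : ℝ) ^ 4 * π ^ 4 + lam * ((k : ℕ+) : ℝ) ^ 2 * π ^ 2)
          - (-(j : ℝ) ^ 4 * π ^ 4 + lam * (j : ℝ) ^ 2 * π ^ 2) : ℝ) : ℂ)) = 1) :
    ∃ C > (0 : ℝ), ∀ j : ℕ+,
      ‖c j - 1‖ ≤ C * (1 + Real.log (j : ℝ)) / (j : ℝ) ^ 3 :=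
  stmt13_general lam a c M hM hsum heq
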